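/- arXiv:1508.00701 — 2 statements merged into one kernel-verified Lean document; each statement's English description precedes it below -/
import Mathlib

section
/- With k̄ := max_{(s,τ)∈𝔓} |k(s,τ)|, the kernel-based autoconvolution operator satisfies the nonlinearity (Lipschitz-type) condition ‖F(f+h) − F(f) − F'(f)h‖_Y ≤ k̄ ‖h‖²_X for all f, h ∈ X. -/
open MeasureTheory Complex Set Filter Topology
open scoped ENNReal

noncomputable section

/-- Lebesgue measure restricted to `(0,1)`. -/
abbrev μ1 : Measure ℝ := volume.restrict (Set.Ioo (0:ℝ) 1)
/-- Lebesgue measure restricted to `(0,2)`. -/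
abbrev μ2 : Measure ℝ := volume.restrict (Set.Ioo (0:ℝ) 2)
/-- `X = L²_ℂ(0,1)`. -/
abbrev X : Type := Lp ℂ 2 μ1
/-- `Y = L²_ℂ(0,2)`. -/
abbrev Y : Type := Lp ℂ 2 μ2
/-- The parallelogram `𝔓 = {(s,τ) : 0 ≤ τ ≤ 1, τ ≤ s ≤ τ+1}`. -/
def Par : Set (ℝ × ℝ) := {p | 0 ≤ p.2 ∧ p.2 ≤ 1 ∧ p.2 ≤ p.1 ∧ p.1 ≤ p.2 + 1}

/-- Weak (sequential) convergence of a sequence in a complex inner product space. -/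
def WConv {E : Type*} [NormedAddCommGroup E] [InnerProductSpace ℂ E]
    (u : ℕ → E) (x : E) : Prop :=
  ∀ g : E, Tendsto (fun n => (inner ℂ (u n) g : ℂ)) atTop (𝓝 (inner ℂ x g))

/-!
The second-order remainder of the quadratic operator `F` is the operator itself applied to `h`:
by the symmetry `k(s,τ) = k(s,s-τ)` the two mixed terms of `F(f+h)` coincide and cancel against
`F'(f)h`. For `h` vanishing outside `(0,1)`, Cauchy–Schwarz on the window
`W_s = {τ ∈ (0,1) : s - τ ∈ (0,1)}`, which is invariant under `τ ↦ s - τ`, gives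
`|F(h)(s)| ≤ k̄ Φ(s)` with `Φ(s) = ∫_{W_s} |h|²`. Since `Φ ≤ ‖h‖²` and, by Tonelli,
`∫ Φ = ‖h‖²`, we get `‖F(h)‖² ≤ k̄² ‖h‖² ∫ Φ = k̄² ‖h‖⁴`.
-/

theorem sq_eLpNorm_two {α E : Type*} [MeasurableSpace α] [NormedAddCommGroup E] (μ : Measure α)
    (f : α → E) : eLpNorm f 2 μ ^ 2 = ∫⁻ x, ‖f x‖ₑ ^ 2 ∂μ := by
  simpa using eLpNorm_nnreal_pow_eq_lintegral (f := f) (μ := μ) (p := 2) two_ne_zero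

theorem measurable_of_continuousOn_of_eq_zero {α β : Type*} [TopologicalSpace α]
    [MeasurableSpace α] [OpensMeasurableSpace α] [TopologicalSpace β] [MeasurableSpace β]
    [BorelSpace β] [Zero β] {f : α → β} {s : Set α} (hf : ContinuousOn f s)
    (hs : MeasurableSet s) (h₀ : ∀ x ∉ s, f x = 0) : Measurable f := by
  classical
  have hpiece : s.piecewise f 0 = f := by
    ext x
    by_cases hx : x ∈ s <;> simp [hx, h₀]
  exact hpiece ▸ hf.measurable_piecewise continuousOn_const hs

theorem norm_le_of_isGreatest_image_norm {α E : Type*} [NormedAddCommGroup E] {f : α → E}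
    {s : Set α} {c : ℝ} (hc : IsGreatest ((fun x => ‖f x‖) '' s) c) (h₀ : ∀ x ∉ s, f x = 0)
    (x : α) : ‖f x‖ ≤ c := by
  by_cases hx : x ∈ s
  · exact hc.2 ⟨x, hx, rfl⟩
  · obtain ⟨y, -, rfl⟩ := hc.1
    rw [h₀ x hx, norm_zero]
    exact norm_nonneg _

/-- On functions extended by zero outside `(0,1)`, this is the integral defining `F` and `F'`. -/
def kernelConv (k : ℝ × ℝ → ℂ) (g₁ g₂ : ℝ → ℂ) (s : ℝ) : ℂ :=
  ∫ τ, k (s, τ) * g₁ (s - τ) * g₂ τ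

section KernelConv

variable {k : ℝ × ℝ → ℂ} {C s : ℝ}

theorem integrable_kernelConv_integrand (hk : Measurable k) (hkC : ∀ p, ‖k p‖ ≤ C)
    {g₁ g₂ : ℝ → ℂ} (h₁ : MemLp g₁ 2) (h₂ : MemLp g₂ 2) (s : ℝ) :
    Integrable fun τ => k (s, τ) * g₁ (s - τ) * g₂ τ := by
  have h₁' : MemLp (fun τ => g₁ (s - τ)) 2 :=
    h₁.comp_measurePreserving (Measure.measurePreserving_sub_left volume s)
  simpa only [Function.comp_apply, Pi.mul_apply, mul_assoc] using (h₁'.integrable_mul h₂).bdd_mul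
    (hk.comp measurable_prodMk_left).aestronglyMeasurable (ae_of_all _ fun τ => hkC (s, τ))

theorem kernelConv_congr_ae {g₁ g₁' g₂ g₂' : ℝ → ℂ} (h₁ : g₁ =ᵐ[volume] g₁')
    (h₂ : g₂ =ᵐ[volume] g₂') : kernelConv k g₁ g₂ = kernelConv k g₁' g₂' := by
  ext s
  refine integral_congr_ae ?_
  filter_upwards [(Measure.measurePreserving_sub_left volume s).quasiMeasurePreserving.ae_eq h₁,
    h₂] with τ hτ₁ hτ₂
  simp only [Function.comp_apply] at hτ₁
  rw [hτ₁, hτ₂]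

theorem kernelConv_comm (hsymm : ∀ τ, k (s, τ) = k (s, s - τ)) (g₁ g₂ : ℝ → ℂ) :
    kernelConv k g₁ g₂ s = kernelConv k g₂ g₁ s := by
  rw [kernelConv, ← integral_sub_left_eq_self _ volume s]
  refine integral_congr_ae (ae_of_all _ fun τ => ?_)
  simp only [sub_sub_cancel, ← hsymm τ]
  ring

theorem kernelConv_add_add (hk : Measurable k) (hkC : ∀ p, ‖k p‖ ≤ C)
    (hsymm : ∀ τ, k (s, τ) = k (s, s - τ)) {g h : ℝ → ℂ} (hg : MemLp g 2) (hh : MemLp h 2) :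
    kernelConv k (g + h) (g + h) s =
      kernelConv k g g s + 2 * kernelConv k g h s + kernelConv k h h s := by
  have hI {g₁ g₂ : ℝ → ℂ} (h₁ : MemLp g₁ 2) (h₂ : MemLp g₂ 2) :
      Integrable fun τ => k (s, τ) * g₁ (s - τ) * g₂ τ :=
    integrable_kernelConv_integrand hk hkC h₁ h₂ s
  have hcomm := kernelConv_comm hsymm h g
  have expand : (fun τ => k (s, τ) * (g + h) (s - τ) * (g + h) τ) = fun τ =>
      (k (s, τ) * g (s - τ) * g τ + k (s, τ) * g (s - τ) * h τ) +
        (k (s, τ) * h (s - τ) * g τ + k (s, τ) * h (s - τ) * h τ) := by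
    ext τ
    simp only [Pi.add_apply]
    ring
  unfold kernelConv at hcomm ⊢
  rw [expand, integral_add, integral_add (hI hg hg) (hI hg hh),
    integral_add (hI hh hg) (hI hh hh), hcomm]
  · ring
  · exact (hI hg hg).add (hI hg hh)
  · exact (hI hh hg).add (hI hh hh)

end KernelConv

def window (A : Set ℝ) (s : ℝ) : Set ℝ := A ∩ (fun τ => s - τ) ⁻¹' A

section Window

variable {A : Set ℝ} {s : ℝ}

theorem mem_window {τ : ℝ} : τ ∈ window A s ↔ τ ∈ A ∧ s - τ ∈ A := Iff.rfl

theorem sub_mem_window_iff {τ : ℝ} : s - τ ∈ window A s ↔ τ ∈ window A s := by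
  simp only [mem_window, sub_sub_cancel, and_comm]

theorem measurableSet_window (hA : MeasurableSet A) (s : ℝ) : MeasurableSet (window A s) :=
  hA.inter (measurable_id.const_sub s hA)

theorem setLIntegral_window_comp_sub (hA : MeasurableSet A) (b : ℝ → ℝ≥0∞) :
    ∫⁻ τ in window A s, b (s - τ) = ∫⁻ τ in window A s, b τ := by
  classical
  rw [← lintegral_indicator (measurableSet_window hA s),
    ← lintegral_indicator (measurableSet_window hA s),
    ← lintegral_sub_left_eq_self (μ := volume) ((window A s).indicator b) s]
  congr 1
  ext τ
  simp only [indicator_apply, sub_mem_window_iff]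

/-- Cauchy–Schwarz, made sharp by the invariance of the window under `τ ↦ s - τ`. -/
theorem setLIntegral_window_mul_comp_sub_le (hA : MeasurableSet A) {a : ℝ → ℝ≥0∞}
    (ha : Measurable a) :
    ∫⁻ τ in window A s, a (s - τ) * a τ ≤ ∫⁻ τ in window A s, a τ ^ 2 := by
  have hCS := ENNReal.lintegral_mul_le_Lp_mul_Lq (volume.restrict (window A s))
    Real.HolderConjugate.two_two (f := fun τ => a (s - τ))
    (ha.comp (measurable_id.const_sub s)).aemeasurable ha.aemeasurable
  simp only [Pi.mul_apply, ENNReal.rpow_two] at hCS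
  rwa [setLIntegral_window_comp_sub hA (fun u => a u ^ 2),
    ← ENNReal.rpow_add_of_nonneg _ _ (by norm_num) (by norm_num), add_halves,
    ENNReal.rpow_one] at hCS

theorem setLIntegral_window_eq_lintegral (hA : MeasurableSet A) (b : ℝ → ℝ≥0∞) :
    ∫⁻ τ in window A s, b τ = ∫⁻ τ, A.indicator b τ * A.indicator 1 (s - τ) := by
  classical
  rw [← lintegral_indicator (measurableSet_window hA s)]
  congr 1
  ext τ
  by_cases h₁ : τ ∈ A <;> by_cases h₂ : s - τ ∈ A <;> simp [mem_window, h₁, h₂]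

theorem measurable_setLIntegral_window (hA : MeasurableSet A) {b : ℝ → ℝ≥0∞}
    (hb : Measurable b) : Measurable fun s => ∫⁻ τ in window A s, b τ := by
  simp_rw [setLIntegral_window_eq_lintegral hA]
  exact Measurable.lintegral_prod_right' (f := fun p => A.indicator b p.2 * A.indicator 1 (p.1 - p.2))
    (((hb.indicator hA).comp measurable_snd).mul
      ((measurable_one.indicator hA).comp (measurable_fst.sub measurable_snd)))

theorem lintegral_setLIntegral_window (hA : MeasurableSet A) {b : ℝ → ℝ≥0∞}
    (hb : Measurable b) :
    ∫⁻ s, ∫⁻ τ in window A s, b τ = volume A * ∫⁻ τ in A, b τ := by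
  simp_rw [setLIntegral_window_eq_lintegral hA]
  rw [lintegral_lintegral_swap (((hb.indicator hA).comp measurable_snd).mul
      ((measurable_one.indicator hA).comp (measurable_fst.sub measurable_snd))).aemeasurable]
  have hinner (τ : ℝ) :
      ∫⁻ s, A.indicator b τ * A.indicator 1 (s - τ) = A.indicator b τ * volume A := by
    rw [lintegral_const_mul (f := fun s => A.indicator 1 (s - τ)) _
        ((measurable_one.indicator hA).comp (measurable_id.sub_const τ)),
      lintegral_sub_right_eq_self (A.indicator 1) τ, lintegral_indicator_one hA]
  rw [lintegral_congr hinner, lintegral_mul_const _ (hb.indicator hA), lintegral_indicator hA,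
    mul_comm]

end Window

section Estimate

variable {k : ℝ × ℝ → ℂ} {C : ℝ} {A : Set ℝ} {g : ℝ → ℂ}

theorem enorm_kernelConv_le (hkC : ∀ p, ‖k p‖ ≤ C) (hA : MeasurableSet A) (hg : Measurable g)
    (hgA : ∀ u ∉ A, g u = 0) (s : ℝ) :
    ‖kernelConv k g g s‖ₑ ≤ ENNReal.ofReal C * ∫⁻ τ in window A s, ‖g τ‖ₑ ^ 2 := by
  have hvanish : ∀ τ ∉ window A s, k (s, τ) * g (s - τ) * g τ = 0 := by
    intro τ hτ
    rcases not_and_or.1 (mem_window.not.1 hτ) with h | h <;> simp [hgA _ h]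
  calc ‖kernelConv k g g s‖ₑ ≤ ∫⁻ τ, ‖k (s, τ) * g (s - τ) * g τ‖ₑ :=
        enorm_integral_le_lintegral_enorm _
    _ = ∫⁻ τ in window A s, ‖k (s, τ)‖ₑ * (‖g (s - τ)‖ₑ * ‖g τ‖ₑ) := by
        rw [← lintegral_indicator (measurableSet_window hA s)]
        congr 1
        ext τ
        by_cases hτ : τ ∈ window A s
        · simp [indicator_of_mem hτ, enorm_mul, mul_assoc]
        · simp [indicator_of_notMem hτ, hvanish τ hτ]
    _ ≤ ∫⁻ τ in window A s, ENNReal.ofReal C * (‖g (s - τ)‖ₑ * ‖g τ‖ₑ) :=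
        lintegral_mono fun τ => mul_le_mul_left
          ((ofReal_norm _).symm.trans_le (ENNReal.ofReal_le_ofReal (hkC _))) _
    _ = ENNReal.ofReal C * ∫⁻ τ in window A s, ‖g (s - τ)‖ₑ * ‖g τ‖ₑ :=
        lintegral_const_mul' _ _ ENNReal.ofReal_ne_top
    _ ≤ ENNReal.ofReal C * ∫⁻ τ in window A s, ‖g τ‖ₑ ^ 2 :=
        mul_le_mul_right (setLIntegral_window_mul_comp_sub_le hA hg.enorm) _

theorem lintegral_enorm_kernelConv_sq_le (hkC : ∀ p, ‖k p‖ ≤ C) (hA : MeasurableSet A)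
    (hg : Measurable g) (hgA : ∀ u ∉ A, g u = 0) :
    ∫⁻ s, ‖kernelConv k g g s‖ₑ ^ 2
      ≤ volume A * (ENNReal.ofReal C * ∫⁻ τ in A, ‖g τ‖ₑ ^ 2) ^ 2 := by
  set c := ENNReal.ofReal C
  set T := ∫⁻ τ in A, ‖g τ‖ₑ ^ 2
  have hb : Measurable fun τ => ‖g τ‖ₑ ^ 2 := hg.enorm.pow_const 2
  have hΦ := measurable_setLIntegral_window hA hb
  have hbound := enorm_kernelConv_le hkC hA hg hgA
  calc ∫⁻ s, ‖kernelConv k g g s‖ₑ ^ 2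
      ≤ ∫⁻ s, c * T * (c * ∫⁻ τ in window A s, ‖g τ‖ₑ ^ 2) := lintegral_mono fun s => by
        rw [sq]
        refine mul_le_mul' ((hbound s).trans (mul_le_mul_right ?_ _)) (hbound s)
        exact lintegral_mono_set inter_subset_left
    _ = c * T * (c * (volume A * T)) := by
        rw [lintegral_const_mul _ (hΦ.const_mul c), lintegral_const_mul _ hΦ,
          lintegral_setLIntegral_window hA hb]
    _ = volume A * (c * T) ^ 2 := by ring

end Estimate

def zeroExtend (x : X) : ℝ → ℂ := (Ioo 0 1).indicator x

section ZeroExtend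

variable (x : X)

theorem measurable_zeroExtend : Measurable (zeroExtend x) :=
  (Lp.stronglyMeasurable x).measurable.indicator measurableSet_Ioo

theorem zeroExtend_of_notMem {u : ℝ} (hu : u ∉ Ioo 0 1) : zeroExtend x u = 0 :=
  indicator_of_notMem hu _

theorem memLp_zeroExtend : MemLp (zeroExtend x) 2 :=
  (memLp_indicator_iff_restrict measurableSet_Ioo).2 (Lp.memLp x)

theorem zeroExtend_add_ae (y : X) :
    zeroExtend (x + y) =ᵐ[volume] zeroExtend x + zeroExtend y := by
  have hadd := (ae_restrict_iff' measurableSet_Ioo).1 (Lp.coeFn_add x y)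
  filter_upwards [hadd] with u hu
  by_cases h : u ∈ Ioo 0 1
  · simp only [zeroExtend, Pi.add_apply, indicator_of_mem h, hu h]
  · simp [zeroExtend, indicator_of_notMem h]

theorem setLIntegral_enorm_zeroExtend_sq :
    ∫⁻ τ in Ioo 0 1, ‖zeroExtend x τ‖ₑ ^ 2 = eLpNorm x 2 μ1 ^ 2 := by
  rw [sq_eLpNorm_two]
  exact setLIntegral_congr_fun measurableSet_Ioo fun u hu => by
    rw [zeroExtend, indicator_of_mem hu]

theorem intervalIntegral_eq_kernelConv_zeroExtend (k : ℝ × ℝ → ℂ) (y : X) {s : ℝ}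
    (hs : s ∈ Icc 0 2) :
    ∫ τ in (max (s - 1) 0)..(min s 1), k (s, τ) * x (s - τ) * y τ
      = kernelConv k (zeroExtend x) (zeroExtend y) s := by
  have hwin (τ : ℝ) :
      s - τ ∈ Ioo 0 1 ∧ τ ∈ Ioo 0 1 ↔ τ ∈ Ioo (max (s - 1) 0) (min s 1) := by
    simp only [mem_Ioo, max_lt_iff, lt_min_iff]
    constructor <;> intro h <;> refine ⟨⟨?_, ?_⟩, ?_, ?_⟩ <;> linarith
  have hintegrand : (fun τ => k (s, τ) * zeroExtend x (s - τ) * zeroExtend y τ)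
      = (Ioo (max (s - 1) 0) (min s 1)).indicator fun τ => k (s, τ) * x (s - τ) * y τ := by
    ext τ
    by_cases h₁ : s - τ ∈ Ioo 0 1 <;> by_cases h₂ : τ ∈ Ioo 0 1 <;>
      simp [zeroExtend, h₁, h₂, ← hwin]
  have hab : max (s - 1) 0 ≤ min s 1 := by
    simp only [max_le_iff, le_min_iff]
    refine ⟨⟨?_, ?_⟩, ?_, ?_⟩ <;> linarith [hs.1, hs.2]
  rw [intervalIntegral.integral_of_le hab, integral_Ioc_eq_integral_Ioo, kernelConv, hintegrand,
    integral_indicator measurableSet_Ioo]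

theorem eLpNorm_kernelConv_zeroExtend_le {k : ℝ × ℝ → ℂ} {C : ℝ} (hkC : ∀ p, ‖k p‖ ≤ C) :
    eLpNorm (kernelConv k (zeroExtend x) (zeroExtend x)) 2
      ≤ ENNReal.ofReal C * eLpNorm x 2 μ1 ^ 2 := by
  rw [← ENNReal.pow_le_pow_left_iff two_ne_zero, sq_eLpNorm_two,
    ← setLIntegral_enorm_zeroExtend_sq]
  simpa [Real.volume_Ioo] using lintegral_enorm_kernelConv_sq_le hkC measurableSet_Ioo
    (measurable_zeroExtend x) fun u => zeroExtend_of_notMem x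

end ZeroExtend

theorem measurableSet_Par : MeasurableSet Par := by
  simp only [Par, ofPred_and]
  exact (measurableSet_le measurable_const measurable_snd).inter
    ((measurableSet_le measurable_snd measurable_const).inter
      ((measurableSet_le measurable_snd measurable_fst).inter
        (measurableSet_le measurable_fst (measurable_snd.add_const 1))))

theorem mk_sub_mem_Par_iff {s τ : ℝ} : (s, s - τ) ∈ Par ↔ (s, τ) ∈ Par := by
  simp only [Par, mem_ofPred_eq]
  constructor <;> intro h <;> refine ⟨?_, ?_, ?_, ?_⟩ <;> linarith [h.1, h.2.1, h.2.2.1, h.2.2.2]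

/-- With `k̄ = max_{(s,τ)∈𝔓} |k(s,τ)|`, the autoconvolution operator satisfies
the nonlinearity condition `‖F(f+h) − F(f) − F'(f)h‖_Y ≤ k̄ ‖h‖²_X` for all `f, h ∈ X`. -/
theorem stmt3 (k : ℝ × ℝ → ℂ) (hk_cont : ContinuousOn k Par)
    (hk_supp : ∀ p, p ∉ Par → k p = 0)
    (hk_symm : ∀ p ∈ Par, k p = k (p.1, p.1 - p.2))
    (F : X → Y)
    (hF : ∀ f : X, ∀ᵐ s ∂μ2,
      F f s = ∫ τ in (max (s - 1) 0)..(min s 1), k (s, τ) * f (s - τ) * f τ)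
    (DF : X → (X →L[ℂ] Y))
    (hDF : ∀ f h : X, ∀ᵐ s ∂μ2,
      DF f h s = 2 * ∫ τ in (max (s - 1) 0)..(min s 1), k (s, τ) * f (s - τ) * h τ)
    (kbar : ℝ) (hkbar : IsGreatest ((fun p => ‖k p‖) '' Par) kbar) :
    ∀ f h : X, ‖F (f + h) - F f - DF f h‖ ≤ kbar * ‖h‖ ^ 2 := by
  intro f h
  have hk_meas : Measurable k :=
    measurable_of_continuousOn_of_eq_zero hk_cont measurableSet_Par hk_supp
  have hk_bdd := norm_le_of_isGreatest_image_norm hkbar hk_supp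
  have hk_refl (s τ : ℝ) : k (s, τ) = k (s, s - τ) := by
    by_cases hp : (s, τ) ∈ Par
    · exact hk_symm _ hp
    · rw [hk_supp _ hp, hk_supp _ (mk_sub_mem_Par_iff.not.2 hp)]
  have hremainder : ⇑(F (f + h) - F f - DF f h)
      =ᵐ[μ2] kernelConv k (zeroExtend h) (zeroExtend h) := by
    filter_upwards [Lp.coeFn_sub (F (f + h) - F f) (DF f h), Lp.coeFn_sub (F (f + h)) (F f),
      hF (f + h), hF f, hDF f h, ae_restrict_mem measurableSet_Ioo] with s h₁ h₂ h₃ h₄ h₅ hs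
    simp only [h₁, h₂, Pi.sub_apply, h₃, h₄, h₅,
      intervalIntegral_eq_kernelConv_zeroExtend _ _ _ (Ioo_subset_Icc_self hs),
      kernelConv_congr_ae (zeroExtend_add_ae f h) (zeroExtend_add_ae f h),
      kernelConv_add_add hk_meas hk_bdd (hk_refl s) (memLp_zeroExtend f) (memLp_zeroExtend h)]
    ring
  calc ‖F (f + h) - F f - DF f h‖
      = (eLpNorm (kernelConv k (zeroExtend h) (zeroExtend h)) 2 μ2).toReal := by
        rw [Lp.norm_def, eLpNorm_congr_ae hremainder]
    _ ≤ (ENNReal.ofReal kbar * eLpNorm h 2 μ1 ^ 2).toReal :=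
        ENNReal.toReal_mono (by finiteness) ((eLpNorm_mono_measure _ Measure.restrict_le_self).trans
          (eLpNorm_kernelConv_zeroExtend_le h hk_bdd))
    _ = kbar * ‖h‖ ^ 2 := by
        rw [ENNReal.toReal_mul, ENNReal.toReal_pow, ENNReal.toReal_ofReal
          ((norm_nonneg _).trans (hk_bdd 0)), Lp.norm_def]
end
end

section
/- For every f ∈ X, the Hilbert-space adjoint F'(f)* : Y → X of the bounded linear operator F'(f) : X → Y is given explicitly by [F'(f)* r](τ) = 2 ∫_τ^{τ+1} conj(k(s,τ) f(s−τ)) r(s) ds for 0 ≤ τ ≤ 1 and r ∈ Y; that is, ⟨F'(f)h, r⟩_Y = ⟨h, F'(f)* r⟩_X for all h ∈ X, r ∈ Y. -/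
/-!
Both inner products `⟨F'(f)h, r⟩_Y` and `⟨h, A r⟩_X` are twice the integral of
`conj (k(s,τ) f(s-τ) h(τ)) r(s)` over the plane (with `f, h, r` extended by zero), taken in
the two orders `dτ ds` and `ds dτ`, so Fubini gives the adjoint identity. The integrand is
integrable because `k` is bounded on the compact parallelogram, the inner integral of
`|f(s-τ) h(τ)|` is at most `‖f‖₂ ‖h‖₂` for every `s` by Cauchy–Schwarz, and `r ∈ L¹(0,2)`.
-/

open MeasureTheory Complex Set Filter Topology
open scoped ENNReal

noncomputable section

open ComplexConjugate

lemma isClosed_Par : IsClosed Par :=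
  (isClosed_le continuous_const continuous_snd).inter <|
    (isClosed_le continuous_snd continuous_const).inter <|
      (isClosed_le continuous_snd continuous_fst).inter <|
        isClosed_le continuous_fst (by fun_prop : Continuous fun p : ℝ × ℝ => p.2 + 1)

lemma isCompact_Par : IsCompact Par := by
  refine ((isCompact_Icc (a := (0:ℝ)) (b := 2)).prod (isCompact_Icc (a := (0:ℝ)) (b := 1))
    ).of_isClosed_subset isClosed_Par fun p ⟨h0, h1, hτs, hsτ⟩ => ?_
  exact ⟨⟨h0.trans hτs, by linarith⟩, h0, h1⟩

lemma exists_norm_indicator_Par_le {k : ℝ × ℝ → ℂ} (hk : ContinuousOn k Par) :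
    ∃ C, ∀ p, ‖Par.indicator k p‖ ≤ C := by
  obtain ⟨C, hC⟩ := isCompact_Par.exists_bound_of_continuousOn hk
  refine ⟨max C 0, fun p => ?_⟩
  by_cases hp : p ∈ Par
  · simpa [hp] using Or.inl (hC p hp)
  · simp [hp]

lemma aestronglyMeasurable_indicator_Par {k : ℝ × ℝ → ℂ} (hk : ContinuousOn k Par)
    (μ : Measure (ℝ × ℝ)) : AEStronglyMeasurable (Par.indicator k) μ :=
  (aestronglyMeasurable_indicator_iff isClosed_Par.measurableSet).2
    (hk.aestronglyMeasurable isClosed_Par.measurableSet)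

section Holder

variable {𝕜 : Type*} [NormedField 𝕜] {F H R : ℝ → 𝕜}

lemma lintegral_enorm_comp_sub_mul_le (hF : MemLp F 2) (hH : MemLp H 2) (s : ℝ) :
    ∫⁻ τ, ‖F (s - τ) * H τ‖ₑ ≤ eLpNorm F 2 volume * eLpNorm H 2 volume := by
  have hshift : MeasurePreserving (fun τ : ℝ => s - τ) volume volume :=
    Measure.measurePreserving_sub_left volume s
  calc ∫⁻ τ, ‖F (s - τ) * H τ‖ₑ = eLpNorm ((fun τ => F (s - τ)) • H) 1 volume := by
        rw [eLpNorm_one_eq_lintegral_enorm]; rfl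
    _ ≤ eLpNorm (fun τ => F (s - τ)) 2 volume * eLpNorm H 2 volume :=
        eLpNorm_smul_le_mul_eLpNorm hH.1 (hF.1.comp_measurePreserving hshift)
    _ = eLpNorm F 2 volume * eLpNorm H 2 volume := by
        rw [← eLpNorm_comp_measurePreserving hF.1 hshift]; rfl

lemma integrable_comp_sub_mul_mul (hF : MemLp F 2) (hH : MemLp H 2) (hR : Integrable R) :
    Integrable (fun p : ℝ × ℝ => F (p.1 - p.2) * H p.2 * R p.1) (volume.prod volume) := by
  have hmeas : AEStronglyMeasurable (fun p : ℝ × ℝ => F (p.1 - p.2) * H p.2 * R p.1)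
      (volume.prod volume) :=
    ((hF.1.comp_fst.comp_quasiMeasurePreserving
      (measurePreserving_sub_prod volume volume).quasiMeasurePreserving).mul
        hH.1.comp_snd).mul hR.1.comp_fst
  refine ⟨hmeas, ?_⟩
  set C := eLpNorm F 2 volume * eLpNorm H 2 volume
  calc ∫⁻ p, ‖F (p.1 - p.2) * H p.2 * R p.1‖ₑ ∂(volume.prod volume)
      = ∫⁻ s, ‖R s‖ₑ * ∫⁻ τ, ‖F (s - τ) * H τ‖ₑ := by
        rw [lintegral_prod _ hmeas.enorm]
        refine lintegral_congr fun s => ?_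
        simp_rw [enorm_mul]
        rw [← lintegral_const_mul' _ _ enorm_ne_top]
        exact lintegral_congr fun τ => mul_comm _ _
    _ ≤ ∫⁻ s, ‖R s‖ₑ * C :=
        lintegral_mono fun s => by gcongr; exact lintegral_enorm_comp_sub_mul_le hF hH s
    _ = (∫⁻ s, ‖R s‖ₑ) * C := lintegral_mul_const' _ _
        (ENNReal.mul_ne_top hF.eLpNorm_ne_top hH.eLpNorm_ne_top)
    _ < ⊤ := ENNReal.mul_lt_top hR.2 (ENNReal.mul_lt_top hF.eLpNorm_lt_top hH.eLpNorm_lt_top)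

end Holder

def extendX (f : X) : ℝ → ℂ := (Ioo (0:ℝ) 1).indicator f

def extendY (r : Y) : ℝ → ℂ := (Ioo (0:ℝ) 2).indicator r

lemma memLp_extendX (f : X) : MemLp (extendX f) 2 :=
  (memLp_indicator_iff_restrict measurableSet_Ioo).2 (Lp.memLp f)

lemma integrable_extendY (r : Y) : Integrable (extendY r) := by
  have : IsFiniteMeasure μ2 := by
    rw [isFiniteMeasure_restrict]; exact measure_Ioo_lt_top.ne
  exact (integrable_indicator_iff measurableSet_Ioo).2 <|
    memLp_one_iff_integrable.1 ((Lp.memLp r).mono_exponent (by norm_num))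

lemma mem_Ioo_max_min_iff {s τ : ℝ} :
    τ ∈ Ioo (max (s - 1) 0) (min s 1) ↔ s - τ ∈ Ioo 0 1 ∧ τ ∈ Ioo 0 1 := by
  simp only [mem_Ioo, max_lt_iff, lt_min_iff]
  constructor <;> rintro ⟨⟨h₁, h₂⟩, h₃, h₄⟩ <;> refine ⟨⟨?_, ?_⟩, ?_, ?_⟩ <;> linarith

lemma intervalIntegral_eq_integral_extendX (k : ℝ × ℝ → ℂ) (f h : X) {s : ℝ}
    (hs : s ∈ Ioo 0 2) :
    ∫ τ in (max (s - 1) 0)..(min s 1), k (s, τ) * f (s - τ) * h τ =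
      ∫ τ, k (s, τ) * extendX f (s - τ) * extendX h τ := by
  have hle : max (s - 1) 0 ≤ min s 1 := by
    simp only [max_le_iff, le_min_iff]; constructor <;> constructor <;> linarith [hs.1, hs.2]
  rw [intervalIntegral.integral_of_le hle, integral_Ioc_eq_integral_Ioo,
    ← setIntegral_eq_integral_of_forall_compl_eq_zero (s := Ioo (max (s - 1) 0) (min s 1))
      (f := fun τ => k (s, τ) * extendX f (s - τ) * extendX h τ)]
  · refine setIntegral_congr_fun measurableSet_Ioo fun τ hτ => ?_
    obtain ⟨hsτ, hτ⟩ := mem_Ioo_max_min_iff.1 hτ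
    simp only [extendX, indicator_of_mem hsτ, indicator_of_mem hτ]
  · intro τ hτ
    rw [mem_Ioo_max_min_iff, not_and_or] at hτ
    rcases hτ with hsτ | hτ <;> simp [extendX, indicator_of_notMem, *]

lemma intervalIntegral_eq_integral_extendY (k : ℝ × ℝ → ℂ) (f : X) (r : Y) {τ : ℝ}
    (hτ : τ ∈ Ioo 0 1) :
    ∫ s in τ..(τ + 1), conj (k (s, τ) * f (s - τ)) * r s =
      ∫ s, conj (k (s, τ) * extendX f (s - τ)) * extendY r s := by
  have hmem : ∀ {s}, s ∈ Ioo τ (τ + 1) ↔ s - τ ∈ Ioo 0 1 := by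
    intro s; simp only [mem_Ioo]; constructor <;> rintro ⟨h₁, h₂⟩ <;> constructor <;> linarith
  rw [intervalIntegral.integral_of_le (by linarith), integral_Ioc_eq_integral_Ioo,
    ← setIntegral_eq_integral_of_forall_compl_eq_zero (s := Ioo τ (τ + 1))
      (f := fun s => conj (k (s, τ) * extendX f (s - τ)) * extendY r s)]
  · refine setIntegral_congr_fun measurableSet_Ioo fun s hs => ?_
    have hs02 : s ∈ Ioo (0:ℝ) 2 := ⟨by linarith [hs.1, hτ.1], by linarith [hs.2, hτ.2]⟩
    simp only [extendX, extendY, indicator_of_mem (hmem.1 hs), indicator_of_mem hs02]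
  · intro s hs
    simp [extendX, indicator_of_notMem (hmem.not.1 hs)]

def adjointIntegrand (k : ℝ × ℝ → ℂ) (f h : X) (r : Y) (s τ : ℝ) : ℂ :=
  conj (k (s, τ) * extendX f (s - τ) * extendX h τ) * extendY r s

-- `k` is only controlled on `Par`, but the integrand never sees its values elsewhere.
lemma adjointIntegrand_indicator_Par (k : ℝ × ℝ → ℂ) (f h : X) (r : Y) :
    adjointIntegrand (Par.indicator k) f h r = adjointIntegrand k f h r := by
  funext s τ
  by_cases hp : (s, τ) ∈ Par
  · simp [adjointIntegrand, indicator_of_mem hp]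
  · have hout : s - τ ∉ Ioo 0 1 ∨ τ ∉ Ioo 0 1 := by
      rw [← not_and_or]
      rintro ⟨⟨h₁, h₂⟩, h₃, h₄⟩
      exact hp ⟨h₃.le, h₄.le, by linarith, by linarith⟩
    rcases hout with hout | hout <;> simp [adjointIntegrand, extendX, hout]

lemma integrable_adjointIntegrand {k : ℝ × ℝ → ℂ} {C : ℝ}
    (hk : AEStronglyMeasurable k (volume.prod volume)) (hC : ∀ p, ‖k p‖ ≤ C)
    (f h : X) (r : Y) :
    Integrable (Function.uncurry (adjointIntegrand k f h r)) (volume.prod volume) := by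
  have := (integrable_comp_sub_mul_mul (memLp_extendX f).star (memLp_extendX h).star
    (integrable_extendY r)).bdd_mul hk.star (ae_of_all _ fun p => (norm_star (k p)).trans_le (hC p))
  convert this using 2 with ⟨s, τ⟩
  simp only [Function.uncurry_apply_pair, adjointIntegrand, map_mul, Pi.star_apply,
    Complex.star_def]
  ring

lemma inner_eq_two_mul_integral_integral {k : ℝ × ℝ → ℂ} {f h : X} {r u : Y}
    (hu : ∀ᵐ s ∂μ2,
      u s = 2 * ∫ τ in (max (s - 1) 0)..(min s 1), k (s, τ) * f (s - τ) * h τ) :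
    inner ℂ u r = 2 * ∫ s, ∫ τ, adjointIntegrand k f h r s τ := by
  rw [L2.inner_def]
  calc ∫ s in Ioo 0 2, inner ℂ (u s) (r s)
      = ∫ s in Ioo 0 2, 2 * ∫ τ, adjointIntegrand k f h r s τ := by
        refine integral_congr_ae ?_
        filter_upwards [hu, ae_restrict_mem measurableSet_Ioo] with s hus hs
        rw [RCLike.inner_apply, hus, intervalIntegral_eq_integral_extendX k f h hs, map_mul,
          map_ofNat, ← integral_conj, mul_left_comm, ← integral_const_mul]
        congr 2 with τ
        rw [adjointIntegrand, extendY, indicator_of_mem hs, mul_comm]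
    _ = ∫ s, 2 * ∫ τ, adjointIntegrand k f h r s τ :=
        setIntegral_eq_integral_of_forall_compl_eq_zero fun s hs => by
          simp [adjointIntegrand, extendY, hs]
    _ = 2 * ∫ s, ∫ τ, adjointIntegrand k f h r s τ := integral_const_mul _ _

lemma inner_eq_two_mul_integral_integral_swap {k : ℝ × ℝ → ℂ} {f h v : X} {r : Y}
    (hv : ∀ᵐ τ ∂μ1,
      v τ = 2 * ∫ s in τ..(τ + 1), conj (k (s, τ) * f (s - τ)) * r s) :
    inner ℂ h v = 2 * ∫ τ, ∫ s, adjointIntegrand k f h r s τ := by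
  rw [L2.inner_def]
  calc ∫ τ in Ioo 0 1, inner ℂ (h τ) (v τ)
      = ∫ τ in Ioo 0 1, 2 * ∫ s, adjointIntegrand k f h r s τ := by
        refine integral_congr_ae ?_
        filter_upwards [hv, ae_restrict_mem measurableSet_Ioo] with τ hvτ hτ
        rw [RCLike.inner_apply, hvτ, intervalIntegral_eq_integral_extendY k f r hτ,
          mul_assoc, ← integral_mul_const]
        congr 2 with s
        simp only [adjointIntegrand, extendX, indicator_of_mem hτ, map_mul]
        ring
    _ = ∫ τ, 2 * ∫ s, adjointIntegrand k f h r s τ :=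
        setIntegral_eq_integral_of_forall_compl_eq_zero fun τ hτ => by
          simp [adjointIntegrand, extendX, hτ]
    _ = 2 * ∫ τ, ∫ s, adjointIntegrand k f h r s τ := integral_const_mul _ _

lemma inner_eq_inner_of_integral_repr {k : ℝ × ℝ → ℂ} (hk : ContinuousOn k Par)
    {f h v : X} {r u : Y}
    (hu : ∀ᵐ s ∂μ2,
      u s = 2 * ∫ τ in (max (s - 1) 0)..(min s 1), k (s, τ) * f (s - τ) * h τ)
    (hv : ∀ᵐ τ ∂μ1,
      v τ = 2 * ∫ s in τ..(τ + 1), conj (k (s, τ) * f (s - τ)) * r s) :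
    inner ℂ u r = inner ℂ h v := by
  obtain ⟨C, hC⟩ := exists_norm_indicator_Par_le hk
  have hint := integrable_adjointIntegrand (aestronglyMeasurable_indicator_Par hk _) hC f h r
  rw [adjointIntegrand_indicator_Par] at hint
  rw [inner_eq_two_mul_integral_integral hu, inner_eq_two_mul_integral_integral_swap hv,
    integral_integral_swap hint]

theorem stmt4_general (k : ℝ × ℝ → ℂ) (hk_cont : ContinuousOn k Par)
    (DF : X → (X →L[ℂ] Y))
    (hDF : ∀ f h : X, ∀ᵐ s ∂μ2,
      DF f h s = 2 * ∫ τ in (max (s - 1) 0)..(min s 1), k (s, τ) * f (s - τ) * h τ) :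
    ∀ (f : X) (A : Y →L[ℂ] X),
      (∀ r : Y, ∀ᵐ τ ∂μ1,
        A r τ = 2 * ∫ s in τ..(τ + 1), (starRingEnd ℂ) (k (s, τ) * f (s - τ)) * r s) →
      A = ContinuousLinearMap.adjoint (DF f) ∧
        ∀ (h : X) (r : Y), (inner ℂ (DF f h) r : ℂ) = inner ℂ h (A r) := by
  intro f A hA
  have hinner : ∀ (h : X) (r : Y), inner ℂ (DF f h) r = inner ℂ h (A r) := fun h r =>
    inner_eq_inner_of_integral_repr hk_cont (hDF f h) (hA r)
  refine ⟨(ContinuousLinearMap.eq_adjoint_iff _ _).2 fun r h => ?_, hinner⟩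
  rw [← inner_conj_symm, ← hinner, inner_conj_symm]

/-- For every `f ∈ X`, the Hilbert-space adjoint `F'(f)* : Y → X` of the
bounded linear operator `F'(f)` is given by
`[F'(f)* r](τ) = 2 ∫_τ^{τ+1} conj(k(s,τ) f(s−τ)) r(s) ds`; that is, any operator `A : Y → X`
with this integral representation equals the adjoint and satisfies
`⟨F'(f)h, r⟩_Y = ⟨h, A r⟩_X` for all `h ∈ X`, `r ∈ Y`. -/
theorem stmt4 (k : ℝ × ℝ → ℂ) (hk_cont : ContinuousOn k Par)
    (hk_supp : ∀ p, p ∉ Par → k p = 0)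
    (hk_symm : ∀ p ∈ Par, k p = k (p.1, p.1 - p.2))
    (DF : X → (X →L[ℂ] Y))
    (hDF : ∀ f h : X, ∀ᵐ s ∂μ2,
      DF f h s = 2 * ∫ τ in (max (s - 1) 0)..(min s 1), k (s, τ) * f (s - τ) * h τ) :
    ∀ (f : X) (A : Y →L[ℂ] X),
      (∀ r : Y, ∀ᵐ τ ∂μ1,
        A r τ = 2 * ∫ s in τ..(τ + 1), (starRingEnd ℂ) (k (s, τ) * f (s - τ)) * r s) →
      A = ContinuousLinearMap.adjoint (DF f) ∧
        ∀ (h : X) (r : Y), (inner ℂ (DF f h) r : ℂ) = inner ℂ h (A r) :=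
  stmt4_general k hk_cont DF hDF
end
end
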